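/- arXiv:1104.1906 — 2 statements merged into one kernel-verified Lean document; each statement's English description precedes it below -/
import Mathlib

section
/- For integers a_1,…,a_r and positive integers m_1,…,m_r with m = lcm(m_1,…,m_r), (1/m)·Σ_{k=1}^{m} c_{m_1}(k−a_1)···c_{m_r}(k−a_r) = Σ over d_1|m_1,…,d_r|m_r with gcd(d_i,d_j) | a_i − a_j for all i,j, of d_1 μ(m_1/d_1)···d_r μ(m_r/d_r)/lcm(d_1,…,d_r). -/
/-!
Expanding each Ramanujan sum as `c_n(k) = ∑_{d ∣ n, d ∣ k} d μ(n/d)` and multiplying out, the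
average over `k ∈ [1, m]` becomes a sum over tuples `d_i ∣ m_i` of `∏ d_i μ(m_i/d_i)` times the
proportion of `k` with `k ≡ a_i (mod d_i)` for all `i`. By the generalized Chinese remainder
theorem this system is solvable iff `gcd(d_i, d_j) ∣ a_i - a_j` for all `i, j`, and then its
solutions form one residue class modulo `lcm(d_i)`, which divides `m`; so the proportion is
`1 / lcm(d_i)` or `0`.
-/

open Finset ArithmeticFunction
open scoped ArithmeticFunction.Moebius

/-- The Ramanujan sum `c_n(k) = ∑_{d ∣ gcd(k,n)} d · μ(n/d)`, for integer `k`. -/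
def ramanujanSum (n : ℕ) (k : ℤ) : ℤ :=
  ∑ d ∈ (Int.gcd k n).divisors, (d : ℤ) * μ (n / d)

theorem Nat.gcd_lcm_distrib (a b c : ℕ) : gcd a (lcm b c) = lcm (gcd a b) (gcd a c) := by
  have lcm_gcd_self : ∀ x, lcm a (gcd a x) = a := fun x =>
    dvd_antisymm (lcm_dvd dvd_rfl (gcd_dvd_left a x)) (dvd_lcm_left _ _)
  rcases eq_or_ne a 0 with rfl | ha
  · simp
  rcases eq_or_ne b 0 with rfl | hb
  · simp [lcm_gcd_self]
  rcases eq_or_ne c 0 with rfl | hc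
  · simp [lcm_comm, lcm_gcd_self]
  apply eq_of_factorization_eq (gcd_ne_zero_left ha)
    (lcm_ne_zero (gcd_ne_zero_left ha) (gcd_ne_zero_left ha))
  intro p
  simp only [factorization_gcd ha (lcm_ne_zero hb hc), factorization_lcm hb hc,
    factorization_lcm (gcd_ne_zero_left ha) (gcd_ne_zero_left ha), factorization_gcd ha hb,
    factorization_gcd ha hc, Finsupp.inf_apply, Finsupp.sup_apply, inf_sup_left]

theorem Nat.gcd_finset_lcm {ι : Type*} (s : Finset ι) (a : ℕ) (d : ι → ℕ) :
    gcd a (s.lcm d) = s.lcm fun i => gcd a (d i) := by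
  classical
  induction s using Finset.induction_on with
  | empty => simp
  | insert j s _ ih => rw [lcm_insert, lcm_insert, ← ih]; exact gcd_lcm_distrib _ _ _

theorem Int.natCast_finset_lcm_dvd_iff {ι : Type*} {s : Finset ι} {d : ι → ℕ} {x : ℤ} :
    ((s.lcm d : ℕ) : ℤ) ∣ x ↔ ∀ i ∈ s, (d i : ℤ) ∣ x := by
  simp only [Int.natCast_dvd, Finset.lcm_dvd_iff]

theorem Int.exists_dvd_sub_and_dvd_sub {n m : ℕ} {a b : ℤ} (h : (Nat.gcd n m : ℤ) ∣ a - b) :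
    ∃ k : ℤ, (n : ℤ) ∣ k - a ∧ (m : ℤ) ∣ k - b := by
  obtain ⟨t, ht⟩ := h
  rw [Nat.gcd_eq_gcd_ab] at ht
  exact ⟨a - n * n.gcdA m * t, ⟨-(n.gcdA m * t), by ring⟩, ⟨n.gcdB m * t, by linear_combination ht⟩⟩

theorem Int.exists_forall_dvd_sub_iff {ι : Type*} {s : Finset ι} {d : ι → ℕ} {a : ι → ℤ} :
    (∃ k : ℤ, ∀ i ∈ s, (d i : ℤ) ∣ k - a i) ↔
      ∀ i ∈ s, ∀ j ∈ s, (Nat.gcd (d i) (d j) : ℤ) ∣ a i - a j := by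
  classical
  constructor
  · rintro ⟨k, hk⟩ i hi j hj
    rw [← sub_sub_sub_cancel_left (a j) (a i) k]
    exact dvd_sub ((Int.natCast_dvd_natCast.mpr (Nat.gcd_dvd_right _ _)).trans (hk j hj))
      ((Int.natCast_dvd_natCast.mpr (Nat.gcd_dvd_left _ _)).trans (hk i hi))
  induction s using Finset.induction_on with
  | empty => exact fun _ => ⟨0, by simp⟩
  | insert j s _ ih =>
    intro h
    obtain ⟨k₀, hk₀⟩ := ih fun i hi i' hi' =>
      h i (mem_insert_of_mem hi) i' (mem_insert_of_mem hi')
    -- `gcd (d j) (lcm_{i ∈ s} d i) = lcm_{i ∈ s} gcd (d j) (d i)`, and each `gcd (d j) (d i)`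
    -- divides `a j - a i` and `a i - k₀`.
    have hcompat : (Nat.gcd (d j) (s.lcm d) : ℤ) ∣ a j - k₀ := by
      rw [Nat.gcd_finset_lcm, Int.natCast_finset_lcm_dvd_iff]
      intro i hi
      rw [← sub_add_sub_cancel (a j) (a i) k₀]
      exact dvd_add (h j (mem_insert_self j s) i (mem_insert_of_mem hi))
        ((Int.natCast_dvd_natCast.mpr (Nat.gcd_dvd_right _ _)).trans
          (dvd_sub_comm.mp (hk₀ i hi)))
    obtain ⟨k, hkj, hks⟩ := Int.exists_dvd_sub_and_dvd_sub hcompat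
    refine ⟨k, forall_mem_insert _ _ _ |>.mpr ⟨hkj, fun i hi => ?_⟩⟩
    rw [← sub_add_sub_cancel k k₀ (a i)]
    exact dvd_add (Int.natCast_finset_lcm_dvd_iff.mp hks i hi) (hk₀ i hi)

theorem card_filter_Icc_dvd_sub {L M : ℕ} (hLM : L ∣ M) (k₀ : ℤ) :
    #((Icc 1 M).filter fun k : ℕ => (L : ℤ) ∣ k - k₀) = M / L := by
  obtain ⟨t, rfl⟩ := hLM
  rcases Nat.eq_zero_or_pos L with rfl | hL
  · simp
  have hcast : ((Icc 1 (L * t)).filter fun k : ℕ => (L : ℤ) ∣ k - k₀).map Nat.castEmbedding =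
      {x ∈ Ioc (0 : ℤ) (L * t : ℕ) | x ≡ k₀ [ZMOD L]} := by
    ext x
    simp only [mem_map, mem_filter, mem_Icc, mem_Ioc, Nat.castEmbedding_apply, Int.modEq_iff_dvd]
    constructor
    · rintro ⟨k, ⟨⟨h1, h2⟩, hk⟩, rfl⟩
      exact ⟨⟨by omega, by omega⟩, dvd_sub_comm.mp hk⟩
    · rintro ⟨⟨h1, h2⟩, hx⟩
      lift x to ℕ using h1.le
      exact ⟨x, ⟨⟨by omega, by omega⟩, dvd_sub_comm.mp hx⟩, rfl⟩
  rw [← card_map, hcast, Nat.mul_div_cancel_left _ hL, ← Nat.cast_inj (R := ℤ),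
    Int.Ioc_filter_modEq_card _ _ (by exact_mod_cast hL)]
  have hshift : ((((L * t : ℕ) : ℤ) : ℚ) - k₀) / ((L : ℤ) : ℚ) =
      (((0 : ℤ) : ℚ) - k₀) / ((L : ℤ) : ℚ) + (t : ℤ) := by
    push_cast; field_simp; ring
  rw [hshift, Int.floor_add_intCast]
  omega

theorem card_filter_Icc_forall_dvd_sub {ι : Type*} [Fintype ι] (d : ι → ℕ) (a : ι → ℤ) {M : ℕ}
    (hM : univ.lcm d ∣ M) :
    #((Icc 1 M).filter fun k : ℕ => ∀ i, (d i : ℤ) ∣ k - a i) =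
      if ∀ i j, (Nat.gcd (d i) (d j) : ℤ) ∣ a i - a j then M / univ.lcm d else 0 := by
  have hcrt := Int.exists_forall_dvd_sub_iff (s := univ) (d := d) (a := a)
  simp only [mem_univ, forall_const] at hcrt
  split_ifs with hc
  · obtain ⟨k₀, hk₀⟩ := hcrt.mpr hc
    rw [← card_filter_Icc_dvd_sub hM k₀]
    refine congrArg card (filter_congr fun k _ => ?_)
    simp only [Int.natCast_finset_lcm_dvd_iff, mem_univ, forall_const]
    refine forall_congr' fun i => ?_
    rw [← sub_add_sub_cancel (k : ℤ) k₀ (a i), dvd_add_left (hk₀ i)]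
  · rw [card_eq_zero, filter_eq_empty_iff]
    exact fun k _ hk => hc (hcrt.mp ⟨k, hk⟩)

theorem sum_Icc_ite_forall_dvd_sub {ι M : Type*} [Fintype ι] [AddCommMonoid M] (d : ι → ℕ)
    (a : ι → ℤ) {N : ℕ} (hN : univ.lcm d ∣ N) (c : M) :
    ∑ k ∈ Icc 1 N, (if ∀ i, (d i : ℤ) ∣ k - a i then c else 0) =
      if ∀ i j, (Nat.gcd (d i) (d j) : ℤ) ∣ a i - a j then (N / univ.lcm d) • c else 0 := by
  rw [← sum_filter, sum_const, card_filter_Icc_forall_dvd_sub d a hN, ite_smul, zero_smul]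

theorem ramanujanSum_eq_sum_divisors {n : ℕ} (hn : n ≠ 0) (k : ℤ) :
    ramanujanSum n k = ∑ d ∈ n.divisors, if (d : ℤ) ∣ k then (d : ℤ) * μ (n / d) else 0 := by
  rw [ramanujanSum, ← sum_filter]
  congr 1
  ext d
  simp only [mem_filter, Nat.mem_divisors, Int.gcd, Nat.dvd_gcd_iff, Int.natCast_dvd,
    Int.natAbs_natCast, ne_eq, Nat.gcd_eq_zero_iff, hn, and_false, not_false_eq_true, and_true]
  tauto

theorem prod_ramanujanSum_eq_sum {ι R : Type*} [Fintype ι] [DecidableEq ι] [CommRing R]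
    {m : ι → ℕ} (hm : ∀ i, m i ≠ 0) (b : ι → ℤ) :
    ∏ i, (ramanujanSum (m i) (b i) : R) =
      ∑ d ∈ Fintype.piFinset fun i => (m i).divisors,
        if ∀ i, (d i : ℤ) ∣ b i then ∏ i, (d i : R) * μ (m i / d i) else 0 := by
  simp_rw [ramanujanSum_eq_sum_divisors (hm _), Int.cast_sum, apply_ite (Int.cast : ℤ → R),
    Int.cast_mul, Int.cast_natCast, Int.cast_zero]
  rw [prod_univ_sum]
  exact sum_congr rfl fun d _ => by rw [prod_ite_zero]; simp only [mem_univ, forall_const]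

theorem eval_E_a {r : ℕ} (a : Fin r → ℤ) (m : Fin r → ℕ) (hm : ∀ i, 0 < m i) :
    (1 / ((Finset.univ.lcm m : ℕ) : ℚ)) *
      ∑ k ∈ Icc 1 (Finset.univ.lcm m),
        ∏ i, (ramanujanSum (m i) ((k : ℤ) - a i) : ℚ) =
    ∑ d ∈ Fintype.piFinset (fun i => (m i).divisors),
      if ∀ i j, (Nat.gcd (d i) (d j) : ℤ) ∣ a i - a j then
        (∏ i, (d i : ℚ) * (μ (m i / d i) : ℚ)) / ((Finset.univ.lcm d : ℕ) : ℚ)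
      else 0 := by
  have hm₀ : ∀ i, m i ≠ 0 := fun i => (hm i).ne'
  have hM₀ : univ.lcm m ≠ 0 := lcm_ne_zero_iff.mpr fun i _ => hm₀ i
  simp_rw [prod_ramanujanSum_eq_sum hm₀]
  rw [sum_comm, mul_sum]
  refine sum_congr rfl fun d hd => ?_
  have hdM : univ.lcm d ∣ univ.lcm m :=
    lcm_mono_fun fun i _ => Nat.dvd_of_mem_divisors (Fintype.mem_piFinset.mp hd i)
  rw [sum_Icc_ite_forall_dvd_sub d a hdM]
  split_ifs
  · rw [nsmul_eq_mul, Nat.cast_div hdM (Nat.cast_ne_zero.mpr (ne_zero_of_dvd_ne_zero hM₀ hdM))]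
    field_simp [hM₀]
  · simp
end

section
/- For positive integers m_1,…,m_r with m = lcm(m_1,…,m_r) and any integer a, the sum T_a(m_1,…,m_r) := Σ over k_1,…,k_{r−1}, ℓ mod m with gcd(ℓ,m)=1 of c_{m_1}(k_1)···c_{m_{r−1}}(k_{r−1})·c_{m_r}(k_1+…+k_{r−1}+ℓ−a) equals m^{r−1} μ(m) c_m(a) if m_1 = … = m_r = m, and 0 otherwise. -/
/-!
Over `ℂ`, `c_d(k) = ∑ ω ^ k` with `ω` running over the primitive `d`-th roots of unity: this is
Möbius inversion of `∑_{ω ^ n = 1} ω ^ k = n · [n ∣ k]`. For `d₁, d₂ ∣ M` it yields the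
orthogonality relation `∑_{k mod M} c_{d₁}(k) c_{d₂}(k + y) = [d₁ = d₂] · M · c_{d₂}(y)`, since
`∑_{k mod M} (ω₁ ω₂) ^ k` vanishes unless `ω₁ = ω₂⁻¹`, which forces `d₁ = d₂`. Summing out
`k_1, …, k_{r-1}` one at a time collapses `T_a` to `[m_1 = ⋯ = m_r] · m ^ (r-1) · ∑_ℓ c_m(ℓ - a)`,
and the last sum is `μ(m) c_m(a)` because `∑_{ℓ mod m, (ℓ, m) = 1} ω ^ ℓ = μ(m)` for every
primitive `m`-th root `ω`.
-/

open Finset ArithmeticFunction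
open Polynomial (nthRootsFinset)
open scoped ArithmeticFunction.Moebius

lemma ramanujanSum_neg (n : ℕ) (k : ℤ) : ramanujanSum n (-k) = ramanujanSum n k := by
  simp [ramanujanSum]

lemma ramanujanSum_one (n : ℕ) : ramanujanSum n 1 = μ n := by
  simp [ramanujanSum]

lemma geom_sum_eq_ite_of_pow_eq_one {K : Type*} [DivisionRing K] [DecidableEq K] {x : K} {n : ℕ}
    (hx : x ^ n = 1) : ∑ i ∈ range n, x ^ i = if x = 1 then (n : K) else 0 := by
  split_ifs with h
  · simp [h]
  · rw [geom_sum_eq h, hx, sub_self, zero_div]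

namespace IsPrimitiveRoot

variable {R : Type*} [CommRing R] [IsDomain R]

lemma nthRootsFinset_eq_image [DecidableEq R] {ζ : R} {n : ℕ} (hζ : IsPrimitiveRoot ζ n)
    (hn : n ≠ 0) : nthRootsFinset n (1 : R) = (range n).image (ζ ^ ·) := by
  have : NeZero n := ⟨hn⟩
  ext ω
  rw [Polynomial.mem_nthRootsFinset (Nat.pos_of_ne_zero hn), mem_image]
  constructor
  · intro hω
    obtain ⟨i, hi, rfl⟩ := hζ.eq_pow_of_pow_eq_one hω
    exact ⟨i, mem_range.mpr hi, rfl⟩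
  · rintro ⟨i, -, rfl⟩
    rw [← pow_mul, mul_comm, pow_mul, hζ.pow_eq_one, one_pow]

lemma primitiveRoots_eq_image [DecidableEq R] {ζ : R} {n : ℕ} (hζ : IsPrimitiveRoot ζ n)
    (hn : n ≠ 0) : primitiveRoots n R = ((range n).filter (Nat.Coprime · n)).image (ζ ^ ·) := by
  have : NeZero n := ⟨hn⟩
  ext ω
  simp only [mem_primitiveRoots (Nat.pos_of_ne_zero hn), hζ.isPrimitiveRoot_iff, mem_image,
    mem_filter, mem_range, and_assoc]

lemma sum_nthRootsFinset_zpow {K : Type*} [Field K] {ζ : K} {n : ℕ} (hζ : IsPrimitiveRoot ζ n)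
    (hn : n ≠ 0) (k : ℤ) :
    ∑ ω ∈ nthRootsFinset n (1 : K), ω ^ k = if (n : ℤ) ∣ k then (n : K) else 0 := by
  classical
  have hpow : (ζ ^ k) ^ n = 1 := by
    rw [← zpow_natCast, ← zpow_mul, mul_comm, zpow_mul, hζ.zpow_eq_one, one_zpow]
  calc ∑ ω ∈ nthRootsFinset n (1 : K), ω ^ k
      = ∑ i ∈ range n, (ζ ^ k) ^ i := by
        rw [hζ.nthRootsFinset_eq_image hn, sum_image hζ.injOn_pow]
        refine sum_congr rfl fun i _ => ?_
        rw [← zpow_natCast, ← zpow_natCast, ← zpow_mul, ← zpow_mul, mul_comm]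
    _ = _ := by
        rw [geom_sum_eq_ite_of_pow_eq_one hpow]
        exact if_congr (hζ.zpow_eq_one_iff_dvd k) rfl rfl

end IsPrimitiveRoot

lemma sum_divisors_sum_primitiveRoots {R M : Type*} [CommRing R] [IsDomain R] [AddCommMonoid M]
    (n : ℕ) (f : R → M) :
    ∑ e ∈ n.divisors, ∑ ω ∈ primitiveRoots e R, f ω = ∑ ω ∈ nthRootsFinset n (1 : R), f ω := by
  classical
  rw [IsPrimitiveRoot.nthRoots_one_eq_biUnion_primitiveRoots,
    sum_biUnion fun _ _ _ _ h => IsPrimitiveRoot.disjoint h]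

lemma Int.divisors_gcd_eq_filter_dvd {d : ℕ} (hd : d ≠ 0) (k : ℤ) :
    (Int.gcd k d).divisors = d.divisors.filter (fun e : ℕ => (e : ℤ) ∣ k) := by
  ext e
  simp [Nat.mem_divisors, Int.gcd, Nat.dvd_gcd_iff, Int.ofNat_dvd_left, hd, and_comm]

lemma ramanujanSum_eq_sum_primitiveRoots (d : ℕ) (k : ℤ) :
    (ramanujanSum d k : ℂ) = ∑ ω ∈ primitiveRoots d ℂ, ω ^ k := by
  rcases Nat.eq_zero_or_pos d with rfl | hd
  · simp [ramanujanSum]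
  have hroots : ∀ n : ℕ, 0 < n → ∑ e ∈ n.divisors, ∑ ω ∈ primitiveRoots e ℂ, ω ^ k =
      if (n : ℤ) ∣ k then (n : ℂ) else 0 := fun n hn => by
    rw [sum_divisors_sum_primitiveRoots,
      (Complex.isPrimitiveRoot_exp n hn.ne').sum_nthRootsFinset_zpow hn.ne']
  rw [← sum_eq_iff_sum_mul_moebius_eq.mp hroots d hd,
    Nat.sum_divisorsAntidiagonal' fun a b => (μ a : ℂ) * if (b : ℤ) ∣ k then (b : ℂ) else 0,
    ramanujanSum, Int.divisors_gcd_eq_filter_dvd hd.ne', sum_filter]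
  push_cast
  refine sum_congr rfl fun e _ => ?_
  split_ifs <;> ring

lemma sum_primitiveRoots_eq_moebius (n : ℕ) : ∑ ω ∈ primitiveRoots n ℂ, ω = μ n := by
  simpa [ramanujanSum_one] using (ramanujanSum_eq_sum_primitiveRoots n 1).symm

lemma IsPrimitiveRoot.sum_coprime_pow_eq_moebius {ω : ℂ} {n : ℕ} (hω : IsPrimitiveRoot ω n) :
    ∑ j ∈ (range n).filter (Nat.Coprime · n), ω ^ j = μ n := by
  rcases eq_or_ne n 0 with rfl | hn
  · simp
  rw [← sum_primitiveRoots_eq_moebius, hω.primitiveRoots_eq_image hn,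
    sum_image (hω.injOn_pow.mono (coe_subset.mpr (filter_subset _ _)))]

lemma sum_range_zpow_mul_zpow_add {K : Type*} [Field K] [DecidableEq K] {M : ℕ} {ω₁ ω₂ : K}
    (h₁ : ω₁ ^ M = 1) (h₂ : ω₂ ^ M = 1) (hω₂ : ω₂ ≠ 0) (y : ℤ) :
    ∑ k ∈ range M, ω₁ ^ (k : ℤ) * ω₂ ^ ((k : ℤ) + y) = if ω₁ = ω₂⁻¹ then M * ω₂ ^ y else 0 := by
  have hprod : (ω₁ * ω₂) ^ M = 1 := by rw [mul_pow, h₁, h₂, one_mul]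
  calc ∑ k ∈ range M, ω₁ ^ (k : ℤ) * ω₂ ^ ((k : ℤ) + y)
      = ω₂ ^ y * ∑ k ∈ range M, (ω₁ * ω₂) ^ k := by
        rw [mul_sum]
        refine sum_congr rfl fun k _ => ?_
        rw [zpow_add₀ hω₂, zpow_natCast, zpow_natCast, mul_pow]
        ring
    _ = _ := by
        rw [geom_sum_eq_ite_of_pow_eq_one hprod]
        simp only [mul_eq_one_iff_eq_inv₀ hω₂]
        split_ifs <;> ring

lemma sum_ramanujanSum_mul_ramanujanSum_add {M d₁ d₂ : ℕ} (hM : M ≠ 0) (h₁ : d₁ ∣ M)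
    (h₂ : d₂ ∣ M) (y : ℤ) :
    ∑ k ∈ range M, ramanujanSum d₁ k * ramanujanSum d₂ (k + y) =
      if d₁ = d₂ then M * ramanujanSum d₂ y else 0 := by
  have hd₁ := Nat.pos_of_dvd_of_pos h₁ (Nat.pos_of_ne_zero hM)
  have hd₂ := Nat.pos_of_dvd_of_pos h₂ (Nat.pos_of_ne_zero hM)
  apply Int.cast_injective (α := ℂ)
  push_cast
  simp only [ramanujanSum_eq_sum_primitiveRoots, sum_mul_sum]
  calc ∑ k ∈ range M, ∑ ω₁ ∈ primitiveRoots d₁ ℂ, ∑ ω₂ ∈ primitiveRoots d₂ ℂ,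
        ω₁ ^ (k : ℤ) * ω₂ ^ ((k : ℤ) + y)
      = ∑ ω₂ ∈ primitiveRoots d₂ ℂ, ∑ ω₁ ∈ primitiveRoots d₁ ℂ, ∑ k ∈ range M,
          ω₁ ^ (k : ℤ) * ω₂ ^ ((k : ℤ) + y) := by
        rw [sum_comm]
        refine (sum_congr rfl fun _ _ => sum_comm).trans sum_comm
    _ = ∑ ω₂ ∈ primitiveRoots d₂ ℂ, ∑ ω₁ ∈ primitiveRoots d₁ ℂ,
          if ω₁ = ω₂⁻¹ then (M * ω₂ ^ y : ℂ) else 0 := by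
        refine sum_congr rfl fun ω₂ hω₂ => sum_congr rfl fun ω₁ hω₁ => ?_
        rw [mem_primitiveRoots hd₁] at hω₁
        rw [mem_primitiveRoots hd₂] at hω₂
        exact sum_range_zpow_mul_zpow_add ((hω₁.pow_eq_one_iff_dvd M).mpr h₁)
          ((hω₂.pow_eq_one_iff_dvd M).mpr h₂) (hω₂.ne_zero hd₂.ne') y
    _ = ∑ ω₂ ∈ primitiveRoots d₂ ℂ, if d₁ = d₂ then (M * ω₂ ^ y : ℂ) else 0 := by
        refine sum_congr rfl fun ω₂ hω₂ => ?_
        rw [mem_primitiveRoots hd₂] at hω₂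
        rw [sum_ite_eq']
        refine if_congr ?_ rfl rfl
        rw [mem_primitiveRoots hd₁]
        exact ⟨fun h => h.unique hω₂.inv, fun h => h ▸ hω₂.inv⟩
    _ = _ := by
        split_ifs <;> simp [mul_sum]

lemma sum_coprime_ramanujanSum_sub (M : ℕ) (a : ℤ) :
    ∑ l ∈ (range M).filter (Nat.Coprime · M), ramanujanSum M (l - a) =
      μ M * ramanujanSum M a := by
  rcases eq_or_ne M 0 with rfl | hM
  · simp
  apply Int.cast_injective (α := ℂ)
  push_cast
  rw [← ramanujanSum_neg, ramanujanSum_eq_sum_primitiveRoots, mul_sum]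
  simp only [ramanujanSum_eq_sum_primitiveRoots]
  rw [sum_comm]
  refine sum_congr rfl fun ω hω => ?_
  rw [mem_primitiveRoots (Nat.pos_of_ne_zero hM)] at hω
  rw [← hω.sum_coprime_pow_eq_moebius, sum_mul]
  refine sum_congr rfl fun l _ => ?_
  rw [sub_eq_add_neg, zpow_add₀ (hω.ne_zero hM), zpow_natCast]

lemma Finset.sum_piFinset_fin_succ {β : Type*} [AddCommMonoid β] {n : ℕ} {α : Fin (n + 1) → Type*}
    (S : ∀ i, Finset (α i)) (f : (∀ i, α i) → β) :
    ∑ k ∈ Fintype.piFinset S, f k =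
      ∑ x ∈ S 0, ∑ k ∈ Fintype.piFinset (Fin.tail S), f (Fin.cons x k) := by
  have h := filter_piFinset_eq_map_consEquiv S (fun _ => True)
  simp only [filter_true] at h
  rw [h, sum_map, sum_product]
  rfl

lemma sum_piFinset_prod_ramanujanSum_mul {M : ℕ} (hM : M ≠ 0) {n : ℕ} {d : Fin n → ℕ}
    (hd : ∀ i, d i ∣ M) {e : ℕ} (he : e ∣ M) (y : ℤ) :
    ∑ k ∈ Fintype.piFinset (fun _ : Fin n => range M),
        (∏ i, ramanujanSum (d i) (k i)) * ramanujanSum e (∑ i, (k i : ℤ) + y) =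
      if ∀ i, d i = e then (M : ℤ) ^ n * ramanujanSum e y else 0 := by
  induction n generalizing y with
  | zero => simp
  | succ n ih =>
    rw [sum_piFinset_fin_succ]
    calc _ = ∑ x ∈ range M, ramanujanSum (d 0) x *
            ∑ k ∈ Fintype.piFinset (fun _ : Fin n => range M),
              (∏ i, ramanujanSum (d i.succ) (k i)) *
                ramanujanSum e (∑ i, (k i : ℤ) + (x + y)) := by
          refine sum_congr rfl fun x _ => ?_
          rw [mul_sum]
          refine sum_congr rfl fun k _ => ?_
          simp only [Fin.prod_univ_succ, Fin.sum_univ_succ, Fin.cons_zero, Fin.cons_succ]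
          ring_nf
      _ = (if ∀ i : Fin n, d i.succ = e then (M : ℤ) ^ n else 0) *
            ∑ x ∈ range M, ramanujanSum (d 0) x * ramanujanSum e (x + y) := by
          simp only [ih (fun i => hd i.succ), ite_mul, zero_mul, mul_ite, mul_zero, sum_ite_irrel,
            sum_const_zero, mul_sum]
          refine if_congr Iff.rfl (sum_congr rfl fun x _ => by ring) rfl
      _ = if ∀ i, d i = e then (M : ℤ) ^ (n + 1) * ramanujanSum e y else 0 := by
          rw [sum_ramanujanSum_mul_ramanujanSum_add hM (hd 0) he]
          by_cases h₀ : d 0 = e <;> by_cases hsucc : ∀ i : Fin n, d i.succ = e <;>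
            simp [Fin.forall_fin_succ, h₀, hsucc, pow_succ, mul_assoc]

lemma Fin.forall_eq_lcm_iff_castSucc_eq_last {n : ℕ} (m : Fin (n + 1) → ℕ) :
    (∀ i, m i = univ.lcm m) ↔ ∀ i : Fin n, m i.castSucc = m (Fin.last n) := by
  refine ⟨fun h i => by rw [h, h], fun h => ?_⟩
  have hlast : ∀ i, m i = m (Fin.last n) := Fin.lastCases rfl h
  have : univ.lcm m = m (Fin.last n) :=
    Nat.dvd_antisymm (lcm_dvd fun i _ => (hlast i).dvd) (dvd_lcm (mem_univ _))
  exact fun i => (hlast i).trans this.symm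

theorem eval_T_a {n : ℕ} (m : Fin (n + 1) → ℕ) (hm : ∀ i, 0 < m i) (a : ℤ) :
    ∑ k ∈ Fintype.piFinset (fun _ : Fin n => Finset.range (Finset.univ.lcm m)),
      ∑ l ∈ (Finset.range (Finset.univ.lcm m)).filter
          (fun l => Nat.gcd l (Finset.univ.lcm m) = 1),
        (∏ i : Fin n, ramanujanSum (m i.castSucc) (k i)) *
          ramanujanSum (m (Fin.last n)) ((∑ i : Fin n, (k i : ℤ)) + l - a) =
    if ∀ i, m i = Finset.univ.lcm m then
      ((Finset.univ.lcm m : ℕ) : ℤ) ^ n * μ (Finset.univ.lcm m) *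
        ramanujanSum (Finset.univ.lcm m) a
    else 0 := by
  have hM : univ.lcm m ≠ 0 := by simp [Finset.lcm_eq_zero_iff, (hm _).ne']
  have hdvd : ∀ i, m i ∣ univ.lcm m := fun i => dvd_lcm (mem_univ i)
  rw [sum_comm]
  simp only [add_sub_assoc, sum_piFinset_prod_ramanujanSum_mul hM (fun i => hdvd _) (hdvd _),
    sum_ite_irrel, sum_const_zero, ← mul_sum, ← Fin.forall_eq_lcm_iff_castSucc_eq_last]
  split_ifs with h
  · rw [h (Fin.last n), sum_coprime_ramanujanSum_sub, mul_assoc]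
  · rfl
end
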